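/- Let χ be a regular cardinal with wellordering ≤_χ of H(χ), let X be a countable elementary substructure of (H(χ), ∈, ≤_χ), and let η be an ordinal in X. If z is a subset of η such that every finite subset of z lies in D^X_η, then the Skolem hull Y of X ∪ z in (H(χ), ∈, ≤_χ) satisfies Y ∩ ω₁ = X ∩ ω₁. -/

import Mathlib

open ZFSet FirstOrder

namespace P746

/-! ## First-order language with membership and a wellordering predicate -/

/-- The language with two binary relation symbols: `∈` and a wellordering `<*`. -/
def L : FirstOrder.Language where
  Functions := fun _ => Empty
  Relations := fun n => match n with
    | 2 => Fin 2
    | _ => Empty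

/-- The `L`-structure on (the members of) a ZF-set `M`, interpreting the first relation
as membership and the second as a given relation `r`. -/
def mStruc (M : ZFSet) (r : ZFSet → ZFSet → Prop) : L.Structure M.toSet where
  funMap := fun f _ => f.elim
  RelMap := fun {n} => match n with
    | 0 => fun R _ => R.elim
    | 1 => fun R _ => R.elim
    | 2 => fun R v => @ite _ (R = (0 : Fin 2)) (decEq (α := Fin 2) R 0) ((v 0 : ZFSet) ∈ (v 1 : ZFSet)) (r (v 0) (v 1))
    | (_+3) => fun R _ => R.elim

/-- `X` is an elementary substructure of `(M, ∈, r)`: `X ⊆ M` and every first-order formula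
with parameters from `X` holds in `X` iff it holds in `M`. -/
def ElemSub (M : ZFSet) (r : ZFSet → ZFSet → Prop) (X : ZFSet) : Prop :=
  ∃ h : X ⊆ M,
    ∀ (n : ℕ) (φ : L.Formula (Fin n)) (v : Fin n → X.toSet),
      (letI := mStruc M r
       φ.Realize (fun i => (⟨(v i : ZFSet), h (v i).2⟩ : M.toSet))) ↔
      (letI := mStruc X r; φ.Realize v)

/-- `r` is a wellordering of the members of `S`. -/
def WOn (S : ZFSet) (r : ZFSet → ZFSet → Prop) : Prop :=
  IsWellOrder S.toSet (Subrel r S.toSet)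

/-! ## Basic set-theoretic notions inside `ZFSet` -/

/-- `x` is a (von Neumann) ordinal: a transitive set of transitive sets. -/
def IsOrd (x : ZFSet) : Prop :=
  x.IsTransitive ∧ ∀ y ∈ x.toSet, ZFSet.IsTransitive y

/-- `w` is the first uncountable ordinal `ω₁`. -/
def IsOmega1 (w : ZFSet) : Prop :=
  IsOrd w ∧ ¬ w.toSet.Countable ∧ ∀ y ∈ w.toSet, y.toSet.Countable

/-- The set `[x]^{<ω}` of finite subsets of `x`. -/
noncomputable def finPow (x : ZFSet) : ZFSet :=
  ZFSet.sep (fun a => a.toSet.Finite) x.powerset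

/-- The set `[x]^n` of subsets of `x` of size `n`. -/
noncomputable def finPowCard (x : ZFSet) (n : ℕ) : ZFSet :=
  ZFSet.sep (fun a => a.toSet.Finite ∧ a.toSet.ncard = n) x.powerset

/-- `D^X_η`: the set of finite `a ⊆ η` such that `f(a) ∈ X` for every
`f : [η]^{|a|} → ω₁` belonging to `X` (`w` stands for `ω₁`). -/
def Dset (w X η : ZFSet) : Set ZFSet :=
  {a | a ∈ finPow η ∧ ∀ f ∈ X.toSet, ZFSet.IsFunc (finPowCard η a.toSet.ncard) w f →
    ∀ v : ZFSet, ZFSet.pair a v ∈ f → v ∈ X}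

/-- The Skolem hull of `X ∪ z` in `M` (with functions on `[η]^{<ω}`):
`X` together with all values `f(a)` for `f : [η]^{<ω} → M` in `X` and finite `a ⊆ z`. -/
def SkHull (M η X z : ZFSet) : Set ZFSet :=
  X.toSet ∪ {y | ∃ f ∈ X.toSet, ZFSet.IsFunc (finPow η) M f ∧
    ∃ a : ZFSet, a ∈ finPow η ∧ a ⊆ z ∧ ZFSet.pair a y ∈ f}

/-- `x` is hereditarily of cardinality less than `κ`. -/
def HerLt (κ : Cardinal) (x : ZFSet) : Prop :=
  ZFSet.mem_wf.fix (C := fun _ => Prop)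
    (fun y ih => Cardinal.mk y.toSet < κ ∧ ∀ z, ∀ h : z ∈ y, ih z h) x

/-- `H` is the collection `H(κ)` of sets hereditarily of cardinality `< κ`. -/
def IsHCard (κ : Cardinal) (H : ZFSet) : Prop :=
  ∀ x : ZFSet, x ∈ H ↔ HerLt κ x

/-! ## Clubs, stationarity and canonical functions on `ω₁` -/

noncomputable def omega1 : Ordinal.{0} := (Cardinal.aleph 1).ord
noncomputable def omega2 : Ordinal.{0} := (Cardinal.aleph 2).ord

/-- `C` is a club (closed unbounded) subset of `ω₁`. -/
def IsClub (C : Set Ordinal.{0}) : Prop :=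
  C ⊆ Set.Iio omega1 ∧
  (∀ o, o < omega1 → (o ≠ 0 ∧ ∀ a < o, Order.succ a < o) → (∀ b, b < o → ∃ c ∈ C, b ≤ c ∧ c < o) → o ∈ C) ∧
  (∀ b, b < omega1 → ∃ c ∈ C, b < c ∧ c < omega1)

/-- `S` is a stationary subset of `ω₁`. -/
def IsStat (S : Set Ordinal.{0}) : Prop :=
  ∀ C, IsClub C → (S ∩ C).Nonempty

/-- `f ≤ g` on a club. -/
def BddOnClub (f g : Ordinal.{0} → Ordinal.{0}) : Prop :=
  ∃ C, IsClub C ∧ ∀ α ∈ C, f α ≤ g α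

/-- `f < g` on a club. -/
def LtOnClub (f g : Ordinal.{0} → Ordinal.{0}) : Prop :=
  ∃ C, IsClub C ∧ ∀ α ∈ C, f α < g α

/-- `f` is a canonical function for `γ`: it is above every canonical function for every `β < γ`
(mod clubs), and minimally so.  (This is the standard recursive characterization of the
statement that the empty condition in `P(ω₁)/NS_{ω₁}` forces `j(f)(ω₁^V) = γ`.) -/
def Canonical : Ordinal.{0} → (Ordinal.{0} → Ordinal.{0}) → Prop :=
  Ordinal.lt_wf.fix (C := fun _ => (Ordinal.{0} → Ordinal.{0}) → Prop)
    (fun γ ih f =>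
      (∀ β, ∀ hβ : β < γ, ∀ g, ih β hβ g → LtOnClub g f) ∧
      ∀ h : Ordinal.{0} → Ordinal.{0},
        (∀ β, ∀ hβ : β < γ, ∀ g, ih β hβ g → LtOnClub g h) → BddOnClub f h)

/-- Every `f : ω₁ → ω₁` is bounded on a club by a canonical function for some `γ < ω₂`. -/
def Bounding : Prop :=
  ∀ f : Ordinal.{0} → Ordinal.{0}, (∀ α, α < omega1 → f α < omega1) →
    ∃ γ, γ < omega2 ∧ ∃ g, Canonical γ g ∧ BddOnClub f g

/-- `o` is the order type of the set of ordinals `s`: there is a strictly increasing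
enumeration of `s` indexed by the ordinals below `o`. -/
def IsOtypOf (o : Ordinal.{0}) (s : Set Ordinal.{0}) : Prop :=
  ∃ e : Ordinal.{0} → Ordinal.{0},
    (∀ i j, i < j → j < o → e i < e j) ∧
    (∀ i, i < o → e i ∈ s) ∧ ∀ x ∈ s, ∃ i, i < o ∧ e i = x

/-! ## Trees on `ω × ω` and `ω × Ord` (as sets of pairs of lists) -/

def IsTreeN (S : Set (List ℕ × List ℕ)) : Prop :=
  ∀ p ∈ S, p.1.length = p.2.length ∧ ∀ n : ℕ, (p.1.take n, p.2.take n) ∈ S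

def IsTreeO (T : Set (List ℕ × List Ordinal.{0})) : Prop :=
  ∀ p ∈ T, p.1.length = p.2.length ∧ ∀ n : ℕ, (p.1.take n, p.2.take n) ∈ T

/-- Projection of a tree on `ω × ω`. -/
def projN (S : Set (List ℕ × List ℕ)) : Set (ℕ → ℕ) :=
  {x | ∃ y : ℕ → ℕ, ∀ n : ℕ,
    (List.ofFn (fun i : Fin n => x i), List.ofFn (fun i : Fin n => y i)) ∈ S}

/-- Projection of a tree on `ω × Ord`. -/
def projO (T : Set (List ℕ × List Ordinal.{0})) : Set (ℕ → ℕ) :=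
  {x | ∃ y : ℕ → Ordinal.{0}, ∀ n : ℕ,
    (List.ofFn (fun i : Fin n => x i), List.ofFn (fun i : Fin n => y i)) ∈ T}

/-- Projection of the restricted tree `T ↾ (ω × α)`. -/
def projOBelow (T : Set (List ℕ × List Ordinal.{0})) (α : Ordinal.{0}) : Set (ℕ → ℕ) :=
  {x | ∃ y : ℕ → Ordinal.{0}, (∀ i, y i < α) ∧ ∀ n : ℕ,
    (List.ofFn (fun i : Fin n => x i), List.ofFn (fun i : Fin n => y i)) ∈ T}

/-! ## Names, evaluation, and generic extensions -/

open Classical in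
/-- Evaluation of a `P`-name `τ` by a filter `G`:
`val G τ = { val G σ : ∃ p ∈ G, (σ, p) ∈ τ }`, by recursion on rank. -/
noncomputable def val (G : ZFSet) : ZFSet → ZFSet :=
  WellFounded.fix (InvImage.wf ZFSet.rank Ordinal.lt_wf)
    (fun τ ih =>
      ZFSet.sUnion <| ZFSet.sep
        (fun y => ∃ z ∈ τ.toSet,
          if h : ∃ σ, ZFSet.rank σ < ZFSet.rank τ ∧ ∃ p ∈ G.toSet, z = ZFSet.pair σ p
          then y = {ih h.choose h.choose_spec.1}
          else y = ∅)
        (ZFSet.powerset (ZFSet.sUnion (ZFSet.sUnion (ZFSet.sUnion τ)))))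

/-- The universe is a generic extension `V[G]` of the transitive class `V` by the
partial order `(P, ≤)` (with `le` the set of pairs `(p,q)` with `p ≤ q`), `G ⊆ P`
a filter meeting every dense subset of `P` lying in `V`, and every set being the
value of a `P`-name in `V`. -/
def IsGenericExt (V : Set ZFSet) (P le G : ZFSet) : Prop :=
  (∀ x ∈ V, ∀ y, y ∈ x → y ∈ V) ∧ P ∈ V ∧ le ∈ V ∧
  (∀ p, p ∈ P → ZFSet.pair p p ∈ le) ∧
  (∀ p q z, ZFSet.pair p q ∈ le → ZFSet.pair q z ∈ le → ZFSet.pair p z ∈ le) ∧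
  (∀ p q, ZFSet.pair p q ∈ le → p ∈ P ∧ q ∈ P) ∧
  G ⊆ P ∧ G ≠ ∅ ∧
  (∀ p q, p ∈ G → q ∈ G → ∃ r, r ∈ G ∧ ZFSet.pair r p ∈ le ∧ ZFSet.pair r q ∈ le) ∧
  (∀ p q, p ∈ G → q ∈ P → ZFSet.pair p q ∈ le → q ∈ G) ∧
  (∀ D, D ∈ V → D ⊆ P → (∀ p, p ∈ P → ∃ q, q ∈ D ∧ ZFSet.pair q p ∈ le) →
    ∃ q, q ∈ G ∧ q ∈ D) ∧
  (∀ x : ZFSet, ∃ τ, τ ∈ V ∧ x = val G τ)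

/-- In the generic extension, the forcing added no new `ω`-sequences of ordinals;
i.e. `P` is `(ω, ∞)`-distributive. -/
def Distributive (V : Set ZFSet) : Prop :=
  ∀ f o : ZFSet, (o.IsTransitive ∧ ∀ y ∈ o.toSet, ZFSet.IsTransitive y) →
    ZFSet.IsFunc ZFSet.omega o f → f ∈ V

/-! ## Ultrafilters and completeness -/

/-- `U` is an ultrafilter on the set `S`. -/
def IsUltraOn (S U : ZFSet) : Prop :=
  U ⊆ S.powerset ∧ S ∈ U ∧ (∅ : ZFSet) ∉ U ∧
  (∀ A B, A ∈ U → A ⊆ B → B ⊆ S → B ∈ U) ∧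
  (∀ A B, A ∈ U → B ∈ U → A ∩ B ∈ U) ∧
  (∀ A, A ⊆ S → (A ∈ U ∨ ZFSet.sep (fun x => x ∉ A) S ∈ U))

/-- `U` is `γ`-complete with respect to families of members of `U` lying in `W`. -/
def CompleteOn (W : Set ZFSet) (γ : Cardinal.{1}) (S U : ZFSet) : Prop :=
  ∀ F, F ∈ W → F ≠ ∅ → F ⊆ U → Cardinal.mk F.toSet < γ →
    ZFSet.sep (fun x => ∀ A ∈ F.toSet, x ∈ A) S ∈ U

/-! ## Internal finite sequences, trees and homogeneity -/

/-- The set `κ^{<ω}` of finite sequences from `κ` (functions `n → κ`, `n < ω`). -/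
noncomputable def seqs (κ : ZFSet) : ZFSet :=
  ZFSet.sep (fun f => ∃ n, n ∈ ZFSet.omega ∧ ZFSet.IsFunc n κ f)
    (((κ ∪ ZFSet.omega).powerset.powerset).powerset)

/-- The set of functions `a → b` as a ZF-set. -/
noncomputable def funsZ (a b : ZFSet) : ZFSet :=
  ZFSet.sep (fun f => ZFSet.IsFunc a b f) (((a ∪ b).powerset.powerset).powerset)

/-- Restriction of a (set-)function `f` to `m`. -/
noncomputable def restr (f m : ZFSet) : ZFSet :=
  ZFSet.sep (fun p => ∃ i v, i ∈ m ∧ p = ZFSet.pair i v) f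

/-- `T` is a tree on `ω × κ`: a set of pairs of finite sequences of equal length,
closed under restriction. -/
def IsTreeZ (κ T : ZFSet) : Prop :=
  ∀ z, z ∈ T → ∃ n s t, n ∈ ZFSet.omega ∧ ZFSet.IsFunc n ZFSet.omega s ∧
    ZFSet.IsFunc n κ t ∧ z = ZFSet.pair s t ∧
    ∀ m, m ∈ n → ZFSet.pair (restr s m) (restr t m) ∈ T

/-- `x ∈ p[T]`, computed in `W`: there is a branch witness `y ∈ W`. -/
def inProjZ (W : Set ZFSet) (κ T x : ZFSet) : Prop :=
  ∃ y, y ∈ W ∧ ZFSet.IsFunc ZFSet.omega κ y ∧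
    ∀ n, n ∈ ZFSet.omega → ZFSet.pair (restr x n) (restr y n) ∈ T

/-- `x ∈ p[T ↾ (ω × A)]` where the branch takes values satisfying `Q`. -/
def inProjVal (κ T x : ZFSet) (Q : ZFSet → Prop) : Prop :=
  ∃ y, ZFSet.IsFunc ZFSet.omega κ y ∧ (∀ i v, ZFSet.pair i v ∈ y → Q v) ∧
    ∀ n, n ∈ ZFSet.omega → ZFSet.pair (restr x n) (restr y n) ∈ T

/-- The tower `⟨π(x ↾ k) : k < ω⟩` is countably complete, relativized to `W`. -/
def CCTower (W : Set ZFSet) (κ π x : ZFSet) : Prop :=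
  ∀ Af, Af ∈ W → ZFSet.IsFunc ZFSet.omega ((seqs κ).powerset) Af →
    (∀ n U a, n ∈ ZFSet.omega → ZFSet.pair (restr x n) U ∈ π →
      ZFSet.pair n a ∈ Af → a ∈ U) →
    ∃ y, y ∈ W ∧ ZFSet.IsFunc ZFSet.omega κ y ∧
      ∀ n a, n ∈ ZFSet.omega → ZFSet.pair n a ∈ Af → restr y n ∈ a

/-- `(T, π)` is a `γ`-homogeneous tree system on `ω × κ`, relativized to the class `W`. -/
def HomSys (W : Set ZFSet) (γ : Cardinal.{1}) (κ T π : ZFSet) : Prop :=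
  IsTreeZ κ T ∧
  (∀ z, z ∈ π → ∃ n s U, n ∈ ZFSet.omega ∧ ZFSet.IsFunc n ZFSet.omega s ∧
    z = ZFSet.pair s U ∧ IsUltraOn (funsZ n κ) U ∧ CompleteOn W γ (funsZ n κ) U ∧
    ZFSet.sep (fun t => ZFSet.pair s t ∈ T) (funsZ n κ) ∈ U) ∧
  (∀ s U U', ZFSet.pair s U ∈ π → ZFSet.pair s U' ∈ π → U = U') ∧
  (∀ x, x ∈ W → ZFSet.IsFunc ZFSet.omega ZFSet.omega x →
    (inProjZ W κ T x ↔
      ((∀ n, n ∈ ZFSet.omega → ∃ U, ZFSet.pair (restr x n) U ∈ π) ∧ CCTower W κ π x)))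

/-- `A` is a `γ`-homogeneously Suslin set of reals, in the sense of the class `W`. -/
def HomSuslinIn (W : Set ZFSet) (γ : Cardinal.{1}) (A : ZFSet) : Prop :=
  A ⊆ funsZ ZFSet.omega ZFSet.omega ∧
  ∃ κ T π, κ ∈ W ∧ T ∈ W ∧ π ∈ W ∧
    (κ.IsTransitive ∧ ∀ y ∈ κ.toSet, ZFSet.IsTransitive y) ∧
    HomSys W γ κ T π ∧
    ∀ x, ZFSet.IsFunc ZFSet.omega ZFSet.omega x → (x ∈ A ↔ inProjZ W κ T x)


/-! ## Additional notions -/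

/-- `γ` is a regular (limit) cardinal, as a ZF-set ordinal: the range of any function
from a smaller ordinal into `γ` is bounded. -/
def IsRegOrd (γ : ZFSet) : Prop :=
  IsOrd γ ∧ (∀ o ∈ γ.toSet, ∃ o' ∈ γ.toSet, o ∈ o') ∧
  ∀ b f, b ∈ γ → ZFSet.IsFunc b γ f → ∃ o ∈ γ.toSet, ∀ x v, ZFSet.pair x v ∈ f → v ∈ o

/-- `Y` is a minimal `(η, λ)`-extension of `X` (inside the model `M` with wellordering `r`):
`Y ≺ M`, `Y ∩ η = X ∩ η`, and `Y` is the Skolem hull of `X ∪ A` for some `A ⊆ λ`. -/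
def IsMinExt (M : ZFSet) (r : ZFSet → ZFSet → Prop) (η lam X Y : ZFSet) : Prop :=
  ElemSub M r Y ∧ Y ∩ η = X ∩ η ∧ ∃ A : ZFSet, A ⊆ lam ∧ Y.toSet = SkHull M lam X A

/-- `U` is a normal measure on the (measurable) cardinal `λ`. -/
def IsNormalMeasure (lam U : ZFSet) : Prop :=
  IsOrd lam ∧ IsUltraOn lam U ∧
  CompleteOn Set.univ (Cardinal.mk lam.toSet) lam U ∧
  (∀ x, x ∈ lam → ({x} : ZFSet) ∉ U) ∧
  ∀ f A, A ∈ U → ZFSet.IsFunc lam lam f →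
    (∀ x v, x ∈ A → ZFSet.pair x v ∈ f → (v ∈ x ∨ x = ∅)) →
    ∃ B c, B ∈ U ∧ ∀ x, x ∈ B → ZFSet.pair x c ∈ f

/-- `g` is the `ξ`-th ordinal of `M` (counting from `0`): the ordinals of `M` below `g`
have order type `ξ`. -/
def NthOrdOf (M : ZFSet) (ξ : Ordinal.{0}) (g : ZFSet) : Prop :=
  IsOrd g ∧ g ∈ M ∧
  IsOtypOf ξ (ZFSet.rank '' {x : ZFSet | x ∈ M.toSet ∧ IsOrd x ∧ x ∈ g})

/-- The relation `≤_o` on a tree `T` on `ω × ω₁`: one sequence extends the other, and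
the first coordinate of the last element of the longer one codes that the length of the
first is below the length of the second in the coded ordering.  (`decode k m n` means:
the value `k` codes `m` before `n`.) -/
def leO (T : Set (List ℕ × List Ordinal.{0})) (decode : ℕ → ℕ → ℕ → Prop)
    (p q : List ℕ × List Ordinal.{0}) : Prop :=
  p ∈ T ∧ q ∈ T ∧
  ((p.1 <+: q.1 ∧ p.2 <+: q.2 ∧ p.1.length < q.1.length ∧
      decode (q.1.getD (q.1.length - 1) 0) p.1.length q.1.length) ∨
   (q.1 <+: p.1 ∧ q.2 <+: p.2 ∧ q.1.length < p.1.length ∧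
      decode (p.1.getD (p.1.length - 1) 0) p.1.length q.1.length))

/-- The binary relation on `ω` coded by `x : ω → ω`:  comparisons of `n` with smaller
numbers are decided by `x (n - 1)`. -/
def codedRel (decode : ℕ → ℕ → ℕ → Prop) (x : ℕ → ℕ) (m n : ℕ) : Prop :=
  (m < n ∧ decode (x (n - 1)) m n) ∨ (n < m ∧ decode (x (m - 1)) m n)

/-!
If `x = f(a) ∈ ω₁` with `f ∈ X` and `a ⊆ z` finite, let `n = |a|` and let `F` be `f` restricted
to `[η]^n`, with every value outside `ω₁` replaced by `0`. Then `F : [η]^n → ω₁` lies in `H(χ)`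
and is first-order definable there from the parameters `f, η ∈ X`: `[η]^n` is definable by
counting elements, and `ω₁ ∩ H(χ)` consists of the ordinals with an injection into `ω` lying in
`H(χ)`. By elementarity `F ∈ X`, and as `a ∈ D^X_η`, `x = F(a) ∈ X`.
-/

open FirstOrder.Language

/-- `∃ x, φ`, where `x` is the variable `none` of `φ`. -/
noncomputable def exNone {α : Type} (φ : L.Formula (Option α)) : L.Formula α :=
  (φ.relabel fun o => o.elim (Sum.inr ()) Sum.inl).iExs Unit

theorem realize_exNone {N : Type*} [L.Structure N] {α : Type} {φ : L.Formula (Option α)}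
    {v : α → N} : (exNone φ).Realize v ↔ ∃ m, φ.Realize fun o => o.elim m v := by
  have key : ∀ i : Unit → N,
      Sum.elim v i ∘ (fun o : Option α => o.elim (Sum.inr ()) Sum.inl) =
        fun o => o.elim (i ()) v :=
    fun i => funext fun o => by cases o <;> rfl
  simp only [exNone, Formula.realize_iExs, Formula.realize_relabel, key]
  exact ⟨fun ⟨i, h⟩ => ⟨i (), h⟩, fun ⟨m, h⟩ => ⟨fun _ => m, h⟩⟩

def Definable (M : ZFSet) (r : ZFSet → ZFSet → Prop) {α : Type} (P : (α → ZFSet) → Prop) :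
    Prop :=
  ∃ φ : L.Formula α, ∀ v : α → M.toSet,
    @Formula.Realize L M.toSet (mStruc M r) α φ v ↔ P fun i => v i

section Definable

variable {M : ZFSet} {r : ZFSet → ZFSet → Prop} {α β : Type} {P Q : (α → ZFSet) → Prop}

theorem Definable.of_iff (hP : Definable M r P)
    (h : ∀ v : α → ZFSet, (∀ i, v i ∈ M) → (P v ↔ Q v)) : Definable M r Q := by
  obtain ⟨φ, hφ⟩ := hP
  exact ⟨φ, fun v => (hφ v).trans (h _ fun i => (v i).2)⟩

theorem definable_mem (a b : α) : Definable M r fun v => v a ∈ v b := by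
  refine ⟨Relations.formula₂ ((0 : Fin 2) : L.Relations 2) (Term.var a) (Term.var b),
    fun v => ?_⟩
  let := mStruc M r
  refine (Formula.realize_rel₂ (L := L) (R := (show L.Relations 2 from (0 : Fin 2)))).trans ?_
  show (if (0 : Fin 2) = 0 then _ else _) ↔ _
  rw [if_pos rfl]
  rfl

theorem definable_eq (a b : α) : Definable M r fun v => v a = v b := by
  refine ⟨Term.equal (Term.var a) (Term.var b), fun v => ?_⟩
  let := mStruc M r
  simp [Subtype.ext_iff]

theorem Definable.not (hP : Definable M r P) : Definable M r fun v => ¬ P v := by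
  obtain ⟨φ, hφ⟩ := hP
  exact ⟨φ.not, fun v => (let := mStruc M r; Formula.realize_not).trans (not_congr (hφ v))⟩

theorem Definable.and (hP : Definable M r P) (hQ : Definable M r Q) :
    Definable M r fun v => P v ∧ Q v := by
  obtain ⟨φ, hφ⟩ := hP
  obtain ⟨ψ, hψ⟩ := hQ
  exact ⟨φ ⊓ ψ, fun v =>
    (let := mStruc M r; Formula.realize_inf).trans (and_congr (hφ v) (hψ v))⟩

theorem Definable.or (hP : Definable M r P) (hQ : Definable M r Q) :
    Definable M r fun v => P v ∨ Q v := by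
  obtain ⟨φ, hφ⟩ := hP
  obtain ⟨ψ, hψ⟩ := hQ
  exact ⟨φ ⊔ ψ, fun v =>
    (let := mStruc M r; Formula.realize_sup).trans (or_congr (hφ v) (hψ v))⟩

theorem Definable.imp (hP : Definable M r P) (hQ : Definable M r Q) :
    Definable M r fun v => P v → Q v :=
  (hP.not.or hQ).of_iff fun _ _ => imp_iff_not_or.symm

theorem Definable.iff (hP : Definable M r P) (hQ : Definable M r Q) :
    Definable M r fun v => P v ↔ Q v :=
  ((hP.imp hQ).and (hQ.imp hP)).of_iff fun _ _ => iff_iff_implies_and_implies.symm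

theorem Definable.comp (hP : Definable M r P) (g : α → β) :
    Definable M r fun v : β → ZFSet => P (v ∘ g) := by
  obtain ⟨φ, hφ⟩ := hP
  exact ⟨φ.relabel g, fun v => (let := mStruc M r; Formula.realize_relabel).trans (hφ _)⟩

-- Quantifiers bind the variable `none`; the free variables `i` become `some i`.
theorem Definable.exists {P : (Option α → ZFSet) → Prop} (hP : Definable M r P) :
    Definable M r fun v => ∃ m ∈ M, P fun o => o.elim m v := by
  obtain ⟨φ, hφ⟩ := hP
  refine ⟨exNone φ, fun v => (let := mStruc M r; realize_exNone).trans ?_⟩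
  have key : ∀ m : M.toSet, (fun o : Option α => ((o.elim m v : M.toSet) : ZFSet)) =
      fun o => o.elim (m : ZFSet) fun i => v i := fun m => funext fun o => by cases o <;> rfl
  simp only [hφ, key]
  exact ⟨fun ⟨m, h⟩ => ⟨m, m.2, h⟩, fun ⟨m, hm, h⟩ => ⟨⟨m, hm⟩, h⟩⟩

theorem Definable.forall {P : (Option α → ZFSet) → Prop} (hP : Definable M r P) :
    Definable M r fun v => ∀ m ∈ M, P fun o => o.elim m v :=
  hP.not.exists.not.of_iff fun _ _ => by simp only [not_exists, not_and, not_not]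

variable (hM : M.IsTransitive)
include hM

theorem Definable.exists_mem {P : (Option α → ZFSet) → Prop} (hP : Definable M r P) (a : α) :
    Definable M r fun v => ∃ m ∈ v a, P fun o => o.elim m v :=
  ((definable_mem none (some a)).and hP).exists.of_iff fun _ hv =>
    ⟨fun ⟨m, _, hma, h⟩ => ⟨m, hma, h⟩, fun ⟨m, hma, h⟩ => ⟨m, hM _ (hv a) hma, hma, h⟩⟩

theorem Definable.forall_mem {P : (Option α → ZFSet) → Prop} (hP : Definable M r P) (a : α) :
    Definable M r fun v => ∀ m ∈ v a, P fun o => o.elim m v :=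
  (hP.not.exists_mem hM a).not.of_iff fun _ _ => by simp only [not_exists, not_and, not_not]

end Definable

section SetPredicates

variable {M : ZFSet} {r : ZFSet → ZFSet → Prop} {α : Type} (hM : M.IsTransitive)
include hM

theorem definable_subset (a b : α) : Definable M r fun v => v a ⊆ v b :=
  ((definable_mem none (some b)).forall_mem hM a).of_iff fun _ _ => ZFSet.subset_def.symm

theorem definable_eq_empty (a : α) : Definable M r fun v => v a = ∅ :=
  ((definable_eq none none).not.forall_mem hM a).of_iff fun v _ => by
    simp [ZFSet.eq_empty]

theorem definable_eq_singleton (a b : α) : Definable M r fun v => v a = {v b} :=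
  ((definable_mem b a).and ((definable_eq none (some b)).forall_mem hM a)).of_iff fun v _ => by
    refine ⟨fun ⟨hb, h⟩ => ?_, fun h => by simp [h]⟩
    ext z
    exact ⟨fun hz => ZFSet.mem_singleton.2 (h z hz), fun hz => ZFSet.mem_singleton.1 hz ▸ hb⟩

theorem definable_eq_doubleton (a b c : α) : Definable M r fun v => v a = {v b, v c} :=
  ((definable_mem b a).and ((definable_mem c a).and
    (((definable_eq none (some b)).or (definable_eq none (some c))).forall_mem hM a))).of_iff
    fun v _ => by
      refine ⟨fun ⟨hb, hc, h⟩ => ?_, fun h => by simp [h]⟩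
      ext z
      refine ⟨fun hz => ZFSet.mem_pair.2 (h z hz), fun hz => ?_⟩
      rcases ZFSet.mem_pair.1 hz with rfl | rfl <;> assumption

theorem definable_eq_pair (p b c : α) : Definable M r fun v => v p = ZFSet.pair (v b) (v c) :=
  ((((definable_eq_singleton hM (some none) (some (some b))).and
    ((definable_eq_doubleton hM none (some (some b)) (some (some c))).and
      (definable_eq_doubleton hM (some (some p)) (some none) none))).exists_mem hM
        (some p)).exists_mem hM p).of_iff fun v _ => by
    simp only [Option.elim]
    constructor
    · rintro ⟨s, -, t, -, rfl, rfl, h⟩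
      exact h
    · intro h
      exact ⟨_, by simp [h, ZFSet.pair], _, by simp [h, ZFSet.pair], rfl, rfl, h⟩

theorem definable_pair_mem (b c f : α) :
    Definable M r fun v => ZFSet.pair (v b) (v c) ∈ v f :=
  ((definable_eq_pair hM none (some b) (some c)).exists_mem hM f).of_iff fun _ _ =>
    ⟨fun ⟨_, hq, e⟩ => e ▸ hq, fun h => ⟨_, h, rfl⟩⟩

theorem definable_isTransitive (a : α) : Definable M r fun v => (v a).IsTransitive :=
  (((definable_mem none (some (some a))).forall_mem hM none).forall_mem hM a).of_iff
    fun _ _ => by simp only [ZFSet.IsTransitive, ZFSet.subset_def]; rfl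

theorem definable_isOrdinal (a : α) : Definable M r fun v => (v a).IsOrdinal :=
  ((definable_isTransitive hM a).and ((definable_isTransitive hM none).forall_mem hM a)).of_iff
    fun _ _ => ZFSet.isOrdinal_iff_forall_mem_isTransitive.symm

end SetPredicates

/-- On ordinals: zero or a successor. -/
def IsZeroOrSucc (x : ZFSet) : Prop :=
  x = ∅ ∨ ∃ j ∈ x, ∀ i ∈ x, i ∈ j ∨ i = j

theorem isZeroOrSucc_toZFSet_natCast (n : ℕ) : IsZeroOrSucc (n : Ordinal).toZFSet := by
  rcases n with _ | k
  · exact .inl (by simp [Ordinal.toZFSet_zero])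
  refine .inr ⟨(k : Ordinal).toZFSet, Ordinal.toZFSet_mem_toZFSet_iff.2 (by exact_mod_cast
    k.lt_succ_self), fun i hi => ?_⟩
  obtain ⟨γ, hγ, rfl⟩ := Ordinal.mem_toZFSet_iff.1 hi
  rw [Ordinal.toZFSet_mem_toZFSet_iff, Ordinal.toZFSet_injective.eq_iff]
  push_cast at hγ
  exact (Order.lt_add_one_iff.1 hγ).lt_or_eq

theorem not_isZeroOrSucc_toZFSet_omega0 : ¬ IsZeroOrSucc Ordinal.omega0.toZFSet := by
  rintro (h | ⟨j, hj, hmax⟩)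
  · exact Ordinal.omega0_ne_zero (Ordinal.toZFSet_injective (h.trans Ordinal.toZFSet_zero.symm))
  obtain ⟨β, hβ, rfl⟩ := Ordinal.mem_toZFSet_iff.1 hj
  rcases hmax _ (Ordinal.toZFSet_mem_toZFSet_iff.2 (Ordinal.isSuccLimit_omega0.add_one_lt hβ))
    with h | h
  · exact (Order.lt_add_one_iff.2 le_rfl).not_gt (Ordinal.toZFSet_mem_toZFSet_iff.1 h)
  · exact (Order.lt_add_one_iff.2 le_rfl).ne' (Ordinal.toZFSet_injective h)

theorem exists_natCast_toZFSet_eq_iff {x : ZFSet} :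
    (∃ n : ℕ, (n : Ordinal).toZFSet = x) ↔ x.IsOrdinal ∧ ∀ k ∈ insert x x, IsZeroOrSucc k := by
  constructor
  · rintro ⟨n, rfl⟩
    refine ⟨ZFSet.isOrdinal_toZFSet _, fun k hk => ?_⟩
    rcases ZFSet.mem_insert_iff.1 hk with rfl | hk
    · exact isZeroOrSucc_toZFSet_natCast n
    obtain ⟨γ, hγ, rfl⟩ := Ordinal.mem_toZFSet_iff.1 hk
    obtain ⟨m, rfl⟩ := Ordinal.lt_omega0.1 (hγ.trans (Ordinal.natCast_lt_omega0 n))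
    exact isZeroOrSucc_toZFSet_natCast m
  · rintro ⟨hx, hk⟩
    obtain ⟨o, rfl⟩ := ZFSet.isOrdinal_iff_mem_range_toZFSet.1 hx
    suffices o < Ordinal.omega0 by
      obtain ⟨n, rfl⟩ := Ordinal.lt_omega0.1 this
      exact ⟨n, rfl⟩
    refine lt_of_not_ge fun h => not_isZeroOrSucc_toZFSet_omega0 (hk _ ?_)
    rcases h.lt_or_eq with h | h
    · exact ZFSet.mem_insert_of_mem _ (Ordinal.toZFSet_mem_toZFSet_iff.2 h)
    · exact h ▸ ZFSet.mem_insert _ _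

section Naturals

variable {M : ZFSet} {r : ZFSet → ZFSet → Prop} {α : Type} (hM : M.IsTransitive)
include hM

theorem definable_isZeroOrSucc (a : α) : Definable M r fun v => IsZeroOrSucc (v a) :=
  (definable_eq_empty hM a).or ((((definable_mem none (some none)).or
    (definable_eq none (some none))).forall_mem hM (some a)).exists_mem hM a)

theorem definable_exists_natCast_toZFSet_eq (a : α) :
    Definable M r fun v => ∃ n : ℕ, (n : Ordinal).toZFSet = v a :=
  ((definable_isOrdinal hM a).and ((definable_isZeroOrSucc hM a).and
    ((definable_isZeroOrSucc hM none).forall_mem hM a))).of_iff fun v _ => by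
      simp only [exists_natCast_toZFSet_eq_iff, ZFSet.mem_insert_iff, forall_eq_or_imp]
      rfl

theorem definable_eq_sdiff_singleton (c b x : α) :
    Definable M r fun v => v c = v b \ {v x} :=
  ((((definable_mem none (some b)).and (definable_eq none (some x)).not).forall_mem hM c).and
    (((definable_eq none (some x)).or (definable_mem none (some c))).forall_mem hM b)).of_iff
    fun v _ => by
      refine ⟨fun ⟨h₁, h₂⟩ => ?_, fun h => ?_⟩
      swap
      · simp only [Option.elim, h, ZFSet.mem_sdiff, ZFSet.mem_singleton]
        exact ⟨fun _ => id, fun m hm => (em _).imp_right fun hmx => ⟨hm, hmx⟩⟩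
      ext m
      simp only [ZFSet.mem_sdiff, ZFSet.mem_singleton]
      exact ⟨h₁ m, fun ⟨hm, hmx⟩ => (h₂ m hm).resolve_left hmx⟩

variable (hsub : ∀ x ∈ M, ∀ c ⊆ x, c ∈ M)
include hsub

theorem definable_encard_eq :
    ∀ (n : ℕ) {α : Type} (b : α), Definable M r fun v => (v b : Set ZFSet).encard = n
  | 0, _, b => (definable_eq_empty hM b).of_iff fun v _ => by
    rw [Nat.cast_zero, Set.encard_eq_zero, ZFSet.eq_empty, Set.eq_empty_iff_forall_notMem]
    rfl
  | n + 1, _, b =>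
    (((definable_eq_sdiff_singleton hM none (some (some b)) (some none)).and
      (definable_encard_eq n none)).exists.exists_mem hM b).of_iff fun v hv => by
      simp only [Option.elim]
      constructor
      · rintro ⟨x, hx, _, -, rfl, hc⟩
        rw [ZFSet.coe_sdiff, ZFSet.coe_singleton] at hc
        rw [← Set.encard_sdiff_singleton_add_one hx, hc]
        rfl
      · intro h
        obtain ⟨x, hx⟩ := Set.nonempty_of_encard_ne_zero (s := (v b : Set ZFSet)) (by simp [h])
        refine ⟨x, hx, _, hsub _ (hv b) _ fun z hz => (ZFSet.mem_sdiff.1 hz).1, rfl, ?_⟩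
        rw [ZFSet.coe_sdiff, ZFSet.coe_singleton, Set.encard_sdiff_singleton_of_mem hx, h]
        exact_mod_cast rfl

theorem definable_mem_finPowCard (b η : α) (n : ℕ) :
    Definable M r fun v => v b ∈ finPowCard (v η) n :=
  ((definable_subset hM b η).and (definable_encard_eq hM hsub n b)).of_iff fun v _ => by
    rw [finPowCard, ZFSet.mem_sep, ZFSet.mem_powerset]
    refine and_congr_right fun _ => ⟨fun h => ⟨Set.finite_of_encard_eq_coe h, ?_⟩,
      fun ⟨h, e⟩ => by rw [← e]; exact h.cast_ncard_eq.symm⟩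
    change (v b : Set ZFSet).encard.toNat = n
    rw [h, ENat.toNat_natCast]

end Naturals

theorem herLt_iff {κ : Cardinal} {x : ZFSet} :
    HerLt κ x ↔ Cardinal.mk x.toSet < κ ∧ ∀ y ∈ x, HerLt κ y := by
  rw [HerLt, WellFounded.fix_eq]
  rfl

theorem mem_of_pair_mem {M x y : ZFSet} (hM : M.IsTransitive) (h : ZFSet.pair x y ∈ M) :
    x ∈ M ∧ y ∈ M := by
  have hxy : ({x, y} : ZFSet) ∈ M := hM _ h (ZFSet.mem_pair.2 (.inr rfl))
  exact ⟨hM _ hxy (ZFSet.mem_pair.2 (.inl rfl)), hM _ hxy (ZFSet.mem_pair.2 (.inr rfl))⟩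

namespace IsHCard

variable {χ : Cardinal} {Hs : ZFSet} (hH : IsHCard χ Hs)
include hH

theorem isTransitive : Hs.IsTransitive :=
  fun y hy z hz => (hH z).2 ((herLt_iff.1 ((hH y).1 hy)).2 z hz)

theorem mk_lt {x : ZFSet} (hx : x ∈ Hs) : Cardinal.mk (x : Set ZFSet) < χ :=
  (herLt_iff.1 ((hH x).1 hx)).1

theorem mem_of_mk_lt {x : ZFSet} (hx : Cardinal.mk (x : Set ZFSet) < χ)
    (h : ∀ y ∈ x, y ∈ Hs) : x ∈ Hs :=
  (hH x).2 (herLt_iff.2 ⟨hx, fun y hy => (hH y).1 (h y hy)⟩)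

theorem mem_of_subset {x c : ZFSet} (hx : x ∈ Hs) (hc : c ⊆ x) : c ∈ Hs :=
  hH.mem_of_mk_lt ((Cardinal.mk_le_mk_of_subset hc).trans_lt (hH.mk_lt hx))
    fun _ hy => hH.isTransitive _ hx (hc hy)

variable (hχ : Cardinal.aleph0 ≤ χ)
include hχ

theorem empty_mem : ∅ ∈ Hs :=
  hH.mem_of_mk_lt (by simp [Cardinal.aleph0_pos.trans_le hχ]) fun _ hy =>
    absurd hy (ZFSet.notMem_empty _)

theorem insert_mem {x y : ZFSet} (hx : x ∈ Hs) (hy : y ∈ Hs) : insert x y ∈ Hs := by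
  refine hH.mem_of_mk_lt ?_ fun z hz => (ZFSet.mem_insert_iff.1 hz).elim (· ▸ hx)
    fun hzy => hH.isTransitive _ hy hzy
  rw [ZFSet.coe_insert]
  exact Cardinal.mk_insert_le.trans_lt
    (Cardinal.add_lt_of_lt hχ (hH.mk_lt hy) (Cardinal.one_lt_aleph0.trans_le hχ))

theorem pair_mem {x y : ZFSet} (hx : x ∈ Hs) (hy : y ∈ Hs) : ZFSet.pair x y ∈ Hs := by
  have hs : ∀ {z}, z ∈ Hs → ({z} : ZFSet) ∈ Hs :=
    fun hz => hH.insert_mem hχ hz (hH.empty_mem hχ)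
  exact hH.insert_mem hχ (hs hx) (hs (hH.insert_mem hχ hx (hs hy)))

theorem toZFSet_natCast_mem (n : ℕ) : (n : Ordinal).toZFSet ∈ Hs := by
  induction n with
  | zero => simpa [Ordinal.toZFSet_zero] using hH.empty_mem hχ
  | succ n ih => simpa [Ordinal.toZFSet_add_one] using hH.insert_mem hχ ih ih

end IsHCard

/-- `Hs` contains a relation that injects `a` into `ω`. -/
def IsCountableIn (Hs a : ZFSet) : Prop :=
  ∃ s ∈ Hs, (∀ u ∈ a, ∃ n : ℕ, ZFSet.pair u (n : Ordinal).toZFSet ∈ s) ∧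
    ∀ u ∈ a, ∀ u' ∈ a, ∀ m, ZFSet.pair u m ∈ s → ZFSet.pair u' m ∈ s → u = u'

theorem definable_isCountableIn {M : ZFSet} {r : ZFSet → ZFSet → Prop} {α : Type}
    (hM : M.IsTransitive) (hnat : ∀ n : ℕ, (n : Ordinal).toZFSet ∈ M) (a : α) :
    Definable M r fun v => IsCountableIn M (v a) :=
  (((((definable_exists_natCast_toZFSet_eq hM none).and
      (definable_pair_mem hM (some none) none (some (some none)))).exists.forall_mem hM
        (some a)).and
    ((((definable_pair_mem hM (some (some none)) none (some (some (some none)))).imp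
      ((definable_pair_mem hM (some none) none (some (some (some none)))).imp
        (definable_eq (some (some none)) (some none)))).forall.forall_mem hM
          (some (some a))).forall_mem hM (some a))).exists).of_iff fun v _ => by
    simp only [Option.elim]
    refine exists_congr fun s => and_congr_right fun hs => and_congr
      (forall₂_congr fun u _ => ⟨fun ⟨_, _, ⟨n, hn⟩, h⟩ => ⟨n, hn ▸ h⟩,
        fun ⟨n, h⟩ => ⟨_, hnat n, ⟨n, rfl⟩, h⟩⟩)
      (forall₂_congr fun u _ => forall₂_congr fun u' _ =>
        ⟨fun h m hm => h m (mem_of_pair_mem hM (hM _ hs hm)).2 hm, fun h m _ => h m⟩)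

theorem IsHCard.countable_iff_isCountableIn {χ : Cardinal} {Hs a : ZFSet} (hH : IsHCard χ Hs)
    (hχ : Cardinal.aleph0 ≤ χ) (ha : a ∈ Hs) :
    (a : Set ZFSet).Countable ↔ IsCountableIn Hs a := by
  constructor
  · intro hc
    obtain ⟨g, hg⟩ := @Countable.exists_injective_nat a hc.to_subtype
    have hmem : ∀ {u m}, ZFSet.pair u m ∈
        ZFSet.range (fun u : a => ZFSet.pair u (g u : Ordinal).toZFSet) →
        ∃ hu : u ∈ a, m = (g ⟨u, hu⟩ : Ordinal).toZFSet := by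
      intro u m h
      obtain ⟨⟨u₀, hu₀⟩, e⟩ := ZFSet.mem_range.1 h
      obtain ⟨rfl, rfl⟩ := ZFSet.pair_injective e
      exact ⟨hu₀, rfl⟩
    refine ⟨ZFSet.range fun u : a => ZFSet.pair u (g u : Ordinal).toZFSet, hH.mem_of_mk_lt ?_ ?_,
      fun u hu => ⟨g ⟨u, hu⟩, ZFSet.mem_range_self (⟨u, hu⟩ : a)⟩,
      fun u _ u' _ m h h' => ?_⟩
    · rw [ZFSet.coe_range]
      exact Cardinal.mk_range_le.trans_lt (hH.mk_lt ha)
    · intro p hp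
      obtain ⟨⟨u, hu⟩, rfl⟩ := ZFSet.mem_range.1 hp
      exact hH.pair_mem hχ (hH.isTransitive _ ha hu) (hH.toZFSet_natCast_mem hχ _)
    · obtain ⟨hu, rfl⟩ := hmem h
      obtain ⟨hu', e⟩ := hmem h'
      exact congrArg Subtype.val (hg (Nat.cast_injective (Ordinal.toZFSet_injective e)))
  · rintro ⟨s, -, hs, hinj⟩
    choose n hn using hs
    have : Function.Injective fun u : (a : Set ZFSet) => n u u.2 := fun u u' e =>
      Subtype.ext (hinj u u.2 u' u'.2 _ (hn u u.2) (by simp only at e; rw [e]; exact hn u' u'.2))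
    exact Set.countable_coe_iff.1 this.countable

theorem mem_omega1_iff {w x : ZFSet} (hw : IsOmega1 w) :
    x ∈ w ↔ x.IsOrdinal ∧ (x : Set ZFSet).Countable := by
  have hwo : w.IsOrdinal := ZFSet.isOrdinal_iff_forall_mem_isTransitive.2 hw.1
  refine ⟨fun h => ⟨hwo.mem h, hw.2.2 x h⟩, fun ⟨hx, hc⟩ => ?_⟩
  rcases hx.mem_trichotomous hwo with h | rfl | h
  · exact h
  · exact absurd hc hw.2.1
  · exact absurd (hc.mono (hx.subset_of_mem h)) hw.2.1

theorem empty_mem_omega1 {w : ZFSet} (hw : IsOmega1 w) : ∅ ∈ w :=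
  (mem_omega1_iff hw).2 ⟨ZFSet.isOrdinal_empty, by simp⟩

theorem IsHCard.definable_mem_omega1 {χ : Cardinal} {Hs w : ZFSet} {r : ZFSet → ZFSet → Prop}
    {α : Type} (hH : IsHCard χ Hs) (hχ : Cardinal.aleph0 ≤ χ) (hw : IsOmega1 w) (a : α) :
    Definable Hs r fun v => v a ∈ w :=
  ((definable_isOrdinal hH.isTransitive a).and
    (definable_isCountableIn hH.isTransitive (hH.toZFSet_natCast_mem hχ) a)).of_iff fun v hv => by
    rw [mem_omega1_iff hw, hH.countable_iff_isCountableIn hχ (hv a)]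

theorem ElemSub.realize_iff {M X : ZFSet} {r : ZFSet → ZFSet → Prop} (hX : ElemSub M r X)
    {β : Type} [Finite β] (φ : L.Formula β) (u : β → X.toSet) :
    @Formula.Realize L M.toSet (mStruc M r) β φ (fun i => ⟨u i, hX.fst (u i).2⟩) ↔
      @Formula.Realize L X.toSet (mStruc X r) β φ u := by
  obtain ⟨n, ⟨e⟩⟩ := Finite.exists_equiv_fin β
  have h := hX.snd n (φ.relabel e) (u ∘ e.symm)
  let := mStruc M r
  let := mStruc X r
  simp only [Formula.realize_relabel] at h
  convert h using 2 <;> ext i <;> simp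

theorem ElemSub.mem_of_definable {M X : ZFSet} {r : ZFSet → ZFSet → Prop} (hX : ElemSub M r X)
    (hM : M.IsTransitive) {α : Type} [Finite α] {P : (Option α → ZFSet) → Prop}
    (hP : Definable M r P) (v : α → ZFSet) (hv : ∀ i, v i ∈ X) {Y : ZFSet} (hY : Y ∈ M)
    (hYP : ∀ p ∈ M, p ∈ Y ↔ P fun o => o.elim p v) : Y ∈ X := by
  -- `M ⊨ ∃ y, y = {p | P(p, v)}` goes down to `X`; the witness is `Y` by extensionality in `M`.
  obtain ⟨φ, hφ⟩ : Definable M r fun u : Option α → ZFSet =>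
      ∀ p ∈ M, p ∈ u none ↔ P fun o => o.elim p fun i => u (some i) :=
    ((definable_mem none (some none)).iff (hP.comp fun o => o.elim none (some ∘ some))).forall
      |>.of_iff fun u _ => forall₂_congr fun p _ =>
        iff_congr Iff.rfl (iff_of_eq (congrArg P (funext fun o => by cases o <;> rfl)))
  have hMφ : @Formula.Realize L M.toSet (mStruc M r) α (exNone φ)
      (fun i => ⟨v i, hX.fst (hv i)⟩) :=
    (let := mStruc M r; realize_exNone).2 ⟨⟨Y, hY⟩, (hφ _).2 hYP⟩
  obtain ⟨y, hy⟩ := (let := mStruc X r; realize_exNone).1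
    ((hX.realize_iff (exNone φ) fun i => ⟨v i, hv i⟩).1 hMφ)
  have hyM := (hφ _).1 ((hX.realize_iff φ _).2 hy)
  suffices (y : ZFSet) = Y from this ▸ y.2
  ext p
  refine ⟨fun hp => ?_, fun hp => ?_⟩
  · have hpM := hM _ (hX.fst y.2) hp
    exact (hYP p hpM).2 ((hyM p hpM).1 hp)
  · have hpM := hM _ hY hp
    exact (hyM p hpM).2 ((hYP p hpM).1 hp)

theorem mk_eq_of_isFunc {A B f : ZFSet} (hf : ZFSet.IsFunc A B f) :
    Cardinal.mk (f : Set ZFSet) = Cardinal.mk (A : Set ZFSet) := by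
  apply le_antisymm
  · have : ∀ p : (f : Set ZFSet), ∃ a : (A : Set ZFSet), ∃ b, (p : ZFSet) = ZFSet.pair a b :=
      fun p => by
        obtain ⟨a, ha, b, -, e⟩ := ZFSet.mem_prod.1 (hf.1 p.2)
        exact ⟨⟨a, ha⟩, b, e⟩
    choose fst snd hp using this
    have hpf : ∀ p, ZFSet.pair (fst p) (snd p) ∈ f := fun p => by rw [← hp p]; exact p.2
    refine Cardinal.mk_le_of_injective (f := fst) fun p q e => Subtype.ext ?_
    have hs : snd p = snd q := (hf.2 _ (fst q).2).unique (by rw [← e]; exact hpf p) (hpf q)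
    rw [hp p, hp q, e, hs]
  · choose g hg using fun a : (A : Set ZFSet) => (hf.2 a a.2).exists
    exact Cardinal.mk_le_of_injective (f := fun a => (⟨_, hg a⟩ : (f : Set ZFSet)))
      fun a a' e => Subtype.ext (ZFSet.pair_injective (congrArg Subtype.val e)).1

/-- `f` restricted to `D`, with the values outside `w` replaced by `∅`. -/
def truncate (f D w : ZFSet) : ZFSet :=
  (D.prod w).sep fun p => ∃ b c, p = ZFSet.pair b c ∧
    (p ∈ f ∨ c = ∅ ∧ ∀ u, ZFSet.pair b u ∈ f → u ∉ w)

section Truncate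

variable {f D w : ZFSet}

theorem mem_truncate {p : ZFSet} : p ∈ truncate f D w ↔ ∃ b ∈ D, ∃ c ∈ w,
    p = ZFSet.pair b c ∧ (p ∈ f ∨ c = ∅ ∧ ∀ u, ZFSet.pair b u ∈ f → u ∉ w) := by
  rw [truncate, ZFSet.mem_sep, ZFSet.mem_prod]
  constructor
  · rintro ⟨⟨b, hb, c, hc, rfl⟩, b', c', e, h⟩
    obtain ⟨rfl, rfl⟩ := ZFSet.pair_injective e
    exact ⟨b, hb, c, hc, rfl, h⟩
  · rintro ⟨b, hb, c, hc, rfl, h⟩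
    exact ⟨⟨b, hb, c, hc, rfl⟩, b, c, rfl, h⟩

theorem pair_mem_truncate {b c : ZFSet} : ZFSet.pair b c ∈ truncate f D w ↔ b ∈ D ∧ c ∈ w ∧
    (ZFSet.pair b c ∈ f ∨ c = ∅ ∧ ∀ u, ZFSet.pair b u ∈ f → u ∉ w) := by
  rw [mem_truncate]
  constructor
  · rintro ⟨b, hb, c, hc, e, h⟩
    obtain ⟨rfl, rfl⟩ := ZFSet.pair_injective e
    exact ⟨hb, hc, h⟩
  · rintro ⟨hb, hc, h⟩
    exact ⟨b, hb, c, hc, rfl, h⟩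

variable {A B : ZFSet} (hf : ZFSet.IsFunc A B f) (hD : D ⊆ A)
include hf hD

theorem isFunc_truncate (hw : ∅ ∈ w) : ZFSet.IsFunc D w (truncate f D w) := by
  refine ⟨fun p hp => (ZFSet.mem_sep.1 hp).1, fun b hb => ?_⟩
  obtain ⟨c₀, hc₀, huniq⟩ := hf.2 b (hD hb)
  by_cases hc₀w : c₀ ∈ w
  · refine ⟨c₀, pair_mem_truncate.2 ⟨hb, hc₀w, .inl hc₀⟩, fun c hc => ?_⟩
    obtain ⟨-, -, h | ⟨-, h⟩⟩ := pair_mem_truncate.1 hc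
    · exact huniq c h
    · exact absurd hc₀w (h c₀ hc₀)
  · have hnot : ∀ u, ZFSet.pair b u ∈ f → u ∉ w := fun u hu => huniq u hu ▸ hc₀w
    refine ⟨∅, pair_mem_truncate.2 ⟨hb, hw, .inr ⟨rfl, hnot⟩⟩, fun c hc => ?_⟩
    obtain ⟨-, hcw, h | ⟨h, -⟩⟩ := pair_mem_truncate.1 hc
    · exact absurd hcw (hnot c h)
    · exact h

theorem IsHCard.truncate_mem {χ : Cardinal} {Hs : ZFSet} (hH : IsHCard χ Hs)
    (hχ : Cardinal.aleph0 ≤ χ) (hfH : f ∈ Hs) (hw : ∅ ∈ w) : truncate f D w ∈ Hs := by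
  refine hH.mem_of_mk_lt ?_ fun p hp => ?_
  · rw [mk_eq_of_isFunc (isFunc_truncate hf hD hw)]
    exact (Cardinal.mk_le_mk_of_subset hD).trans_lt (mk_eq_of_isFunc hf ▸ hH.mk_lt hfH)
  obtain ⟨b, hb, c, -, rfl, h⟩ := mem_truncate.1 hp
  obtain ⟨c₀, hc₀, -⟩ := hf.2 b (hD hb)
  have hpair : ∀ {c}, ZFSet.pair b c ∈ f → ZFSet.pair b c ∈ Hs :=
    fun hc => hH.isTransitive _ hfH hc
  refine hH.pair_mem hχ (mem_of_pair_mem hH.isTransitive (hpair hc₀)).1 ?_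
  obtain h | ⟨rfl, -⟩ := h
  · exact (mem_of_pair_mem hH.isTransitive (hpair h)).2
  · exact hH.empty_mem hχ

end Truncate

theorem IsHCard.definable_mem_truncate {χ : Cardinal} {Hs w : ZFSet}
    {r : ZFSet → ZFSet → Prop} {α : Type} (hH : IsHCard χ Hs) (hχ : Cardinal.aleph0 ≤ χ)
    (hw : IsOmega1 w) (p f η : α) (n : ℕ) :
    Definable Hs r fun v => v p ∈ truncate (v f) (finPowCard (v η) n) w := by
  have hT := hH.isTransitive
  refine (((definable_eq_pair hT (some (some p)) (some none) none).and
    ((definable_mem_finPowCard hT (fun _ hx _ hc => hH.mem_of_subset hx hc) (some none)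
      (some (some η)) n).and
    ((hH.definable_mem_omega1 hχ hw none).and ((definable_mem (some (some p)) (some (some f))).or
      ((definable_eq_empty hT none).and ((definable_pair_mem hT (some (some none)) none
        (some (some (some f)))).imp (hH.definable_mem_omega1 hχ hw none).not).forall)))))
    |>.exists.exists).of_iff fun v hv => ?_
  simp only [Option.elim]
  rw [mem_truncate]
  constructor
  · rintro ⟨b, -, c, -, hp, hb, hc, h⟩
    refine ⟨b, hb, c, hc, hp, h.imp_right fun ⟨h0, hu⟩ => ⟨h0, fun u hu' => ?_⟩⟩
    exact hu u (mem_of_pair_mem hT (hT _ (hv f) hu')).2 hu'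
  · rintro ⟨b, hb, c, hc, hp, h⟩
    obtain ⟨hbH, hcH⟩ := mem_of_pair_mem hT (hp ▸ hv p)
    exact ⟨b, hbH, c, hcH, hp, hb, hc, h.imp_right fun ⟨h0, hu⟩ => ⟨h0, fun u _ => hu u⟩⟩

theorem finPowCard_subset_finPow (η : ZFSet) (n : ℕ) : finPowCard η n ⊆ finPow η := by
  intro b hb
  rw [finPowCard, ZFSet.mem_sep] at hb
  rw [finPow, ZFSet.mem_sep]
  exact ⟨hb.1, hb.2.1⟩

theorem mem_finPowCard_ncard {η a : ZFSet} (ha : a ∈ finPow η) :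
    a ∈ finPowCard η a.toSet.ncard := by
  rw [finPow, ZFSet.mem_sep] at ha
  rw [finPowCard, ZFSet.mem_sep]
  exact ⟨ha.1, ha.2, rfl⟩

theorem ElemSub.truncate_mem {χ : Cardinal} {Hs X f η w B : ZFSet} {r : ZFSet → ZFSet → Prop}
    (hX : ElemSub Hs r X) (hH : IsHCard χ Hs) (hχ : Cardinal.aleph0 ≤ χ) (hw : IsOmega1 w)
    (hfX : f ∈ X) (hηX : η ∈ X) (hf : ZFSet.IsFunc (finPow η) B f) (n : ℕ) :
    truncate f (finPowCard η n) w ∈ X :=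
  hX.mem_of_definable hH.isTransitive (hH.definable_mem_truncate hχ hw none (some 0) (some 1) n)
    ![f, η] (Fin.forall_fin_two.2 ⟨hfX, hηX⟩)
    (hH.truncate_mem hf (finPowCard_subset_finPow η n) hχ (hX.fst hfX) (empty_mem_omega1 hw))
    fun _ _ => Iff.rfl

theorem stmt_1_general (χ : Cardinal.{1}) (hχ : χ.IsRegular) (Hs : ZFSet) (hH : IsHCard χ Hs)
    (r : ZFSet → ZFSet → Prop) (w : ZFSet) (hw : IsOmega1 w)
    (X η z : ZFSet) (hX : ElemSub Hs r X)
    (hη : η ∈ X)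
    (hD : ∀ a : ZFSet, a ⊆ z → a.toSet.Finite → a ∈ Dset w X η) :
    {x : ZFSet | x ∈ SkHull Hs η X z ∧ x ∈ w} = {x : ZFSet | x ∈ X ∧ x ∈ w} := by
  ext x
  refine ⟨fun ⟨hx, hxw⟩ => ⟨?_, hxw⟩, fun ⟨hx, hxw⟩ => ⟨Or.inl hx, hxw⟩⟩
  obtain hx | ⟨f, hfX, hf, a, ha, haz, hax⟩ := hx
  · exact hx
  have haD := mem_finPowCard_ncard ha
  exact (hD a haz (ZFSet.mem_sep.1 ha).2).2 _
    (hX.truncate_mem hH hχ.aleph0_le hw hfX hη hf _)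
    (isFunc_truncate hf (finPowCard_subset_finPow η _) (empty_mem_omega1 hw)) x
    (pair_mem_truncate.2 ⟨haD, hxw, .inl hax⟩)

theorem stmt_1 (χ : Cardinal.{1}) (hχ : χ.IsRegular) (Hs : ZFSet) (hH : IsHCard χ Hs)
    (r : ZFSet → ZFSet → Prop) (hr : WOn Hs r) (w : ZFSet) (hw : IsOmega1 w)
    (X η z : ZFSet) (hX : ElemSub Hs r X) (hXc : X.toSet.Countable)
    (hη : η ∈ X) (hηo : IsOrd η) (hz : z ⊆ η)
    (hD : ∀ a : ZFSet, a ⊆ z → a.toSet.Finite → a ∈ Dset w X η) :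
    {x : ZFSet | x ∈ SkHull Hs η X z ∧ x ∈ w} = {x : ZFSet | x ∈ X ∧ x ∈ w} :=
  stmt_1_general χ hχ Hs hH r w hw X η z hX hη hD

end P746
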